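/- Let H ∈ (1/2, 1). For all u, v ∈ ℝ, ∫_ℝ (u-y)_+^{-(1/2+(1-H))} (v-y)_+^{-(1/2+(1-H))} dy = β(H - 1/2, 2 - 2H) |u - v|^{2H - 2} when u ≠ v, where β denotes the Euler beta function and (x)_+ = max(x,0). -/

import Mathlib

/-!
On `(-∞, v)`, where the integrand lives, substitute `y = u - (u - v) / (1 - z)` with
`z ∈ (0, 1)`: then `u - y = (u - v) / (1 - z)`, `v - y = (u - v) z / (1 - z)`, and with the Jacobian
`(u - v) / (1 - z)²` the integrand becomes `(u - v)^(a + b + 1) z^b (1 - z)^(-a - b - 2)`, a beta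
integrand. The change of variables formula holds without integrability assumptions, so no
convergence argument is needed.
-/

open MeasureTheory Set Real

lemma image_sub_div_one_sub_Ioo {u v : ℝ} (hvu : v < u) :
    (fun z => u - (u - v) / (1 - z)) '' Ioo 0 1 = Iio v := by
  ext y
  constructor
  · rintro ⟨z, ⟨hz0, hz1⟩, rfl⟩
    have : u - v < (u - v) / (1 - z) := by
      rw [lt_div_iff₀ (by linarith)]; nlinarith
    simp only [mem_Iio]; linarith
  · intro (hy : y < v)
    have hpos : 0 < (u - v) / (u - y) := div_pos (by linarith) (by linarith)
    refine ⟨1 - (u - v) / (u - y), ⟨?_, by linarith⟩, ?_⟩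
    · rw [sub_pos, div_lt_one (by linarith)]; linarith
    · simp only [sub_sub_cancel, div_div_cancel₀ (sub_ne_zero.2 hvu.ne')]

lemma injOn_sub_div_one_sub {u v : ℝ} (hvu : v < u) :
    InjOn (fun z => u - (u - v) / (1 - z)) (Ioo 0 1) := by
  intro a ha b hb hab
  have h : (u - v) / (1 - a) = (u - v) / (1 - b) := by simpa using hab
  rw [div_eq_div_iff (by linarith [ha.2]) (by linarith [hb.2])] at h
  nlinarith [mul_left_cancel₀ (sub_ne_zero.2 hvu.ne') h]

lemma hasDerivAt_sub_div_one_sub (u d : ℝ) {z : ℝ} (hz : z ≠ 1) :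
    HasDerivAt (fun z => u - d / (1 - z)) (-(d / (1 - z) ^ 2)) z := by
  have h1z : 1 - z ≠ 0 := sub_ne_zero.2 hz.symm
  refine (((hasDerivAt_const z d).fun_div ((hasDerivAt_id z).const_sub 1) h1z).const_sub u
    ).congr_deriv ?_
  simp only [id]
  ring

lemma div_sq_mul_rpow_mul_rpow {d z : ℝ} (a b : ℝ) (hd : 0 < d) (hz : z ∈ Ioo 0 1) :
    d / (1 - z) ^ 2 * ((d / (1 - z)) ^ a * (d * z / (1 - z)) ^ b)
      = z ^ b * (1 - z) ^ (-a - b - 2) * d ^ (a + b + 1) := by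
  obtain ⟨hz0, hz1⟩ := hz
  have h1z : 0 < 1 - z := by linarith
  rw [div_rpow hd.le h1z.le, div_rpow (by positivity) h1z.le, mul_rpow hd.le hz0.le,
    show -a - b - 2 = -(a + b + 2) by ring, rpow_neg h1z.le, rpow_add h1z, rpow_add h1z,
    rpow_two, rpow_add hd, rpow_add hd, rpow_one]
  have := rpow_pos_of_pos h1z a
  have := rpow_pos_of_pos h1z b
  field_simp

theorem integral_rpow_max_sub_mul_rpow_max_sub {u v : ℝ} (hvu : v < u) (a : ℝ) {b : ℝ}
    (hb : b ≠ 0) :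
    ∫ y, max (u - y) 0 ^ a * max (v - y) 0 ^ b
      = (∫ z in (0 : ℝ)..1, z ^ b * (1 - z) ^ (-a - b - 2)) * (u - v) ^ (a + b + 1) := by
  set F : ℝ → ℝ := fun y => max (u - y) 0 ^ a * max (v - y) 0 ^ b
  have hd : 0 < u - v := sub_pos.2 hvu
  have h_supp : ∫ y, F y = ∫ y in Iio v, F y := by
    refine (setIntegral_eq_integral_of_forall_compl_eq_zero fun y (hy : ¬ y < v) => ?_).symm
    simp [F, max_eq_right (sub_nonpos.2 (not_lt.1 hy)), zero_rpow hb]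
  rw [h_supp, ← image_sub_div_one_sub_Ioo hvu,
    integral_image_eq_integral_abs_deriv_smul measurableSet_Ioo
      (fun z hz => (hasDerivAt_sub_div_one_sub u (u - v) hz.2.ne).hasDerivWithinAt)
      (injOn_sub_div_one_sub hvu),
    intervalIntegral.integral_of_le zero_le_one, integral_Ioc_eq_integral_Ioo,
    ← integral_mul_const]
  refine setIntegral_congr_fun measurableSet_Ioo fun z hz => ?_
  have h1z : 0 < 1 - z := sub_pos.2 hz.2
  have hu : u - (u - (u - v) / (1 - z)) = (u - v) / (1 - z) := by ring
  have hv : v - (u - (u - v) / (1 - z)) = (u - v) * z / (1 - z) := by field_simp; ring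
  simp only [F, smul_eq_mul, hu, hv, abs_neg,
    abs_of_pos (by positivity : 0 < (u - v) / (1 - z) ^ 2),
    max_eq_left (by positivity : 0 ≤ (u - v) / (1 - z)),
    max_eq_left (by have := hz.1; positivity : 0 ≤ (u - v) * z / (1 - z))]
  exact div_sq_mul_rpow_mul_rpow a b hd hz

theorem integral_prod_pos_part_rpow (H : ℝ) (hH : H ∈ Set.Ioo (1/2 : ℝ) 1)
    (u v : ℝ) (huv : u ≠ v) :
    ∫ y : ℝ, (max (u - y) 0) ^ (-(1/2 + (1 - H))) * (max (v - y) 0) ^ (-(1/2 + (1 - H)))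
      = (∫ z in (0:ℝ)..1, z ^ ((H - 1/2) - 1) * (1 - z) ^ ((2 - 2*H) - 1))
          * |u - v| ^ (2*H - 2) := by
  set α := -(1/2 + (1 - H))
  have hα : α ≠ 0 := by simp only [α]; linarith [hH.2]
  have h_beta : ∀ {s t : ℝ}, t < s →
      ∫ y : ℝ, max (s - y) 0 ^ α * max (t - y) 0 ^ α
        = (∫ z in (0:ℝ)..1, z ^ ((H - 1/2) - 1) * (1 - z) ^ ((2 - 2*H) - 1))
            * (s - t) ^ (2*H - 2) := by
    intro s t hts
    rw [show (H - 1/2) - 1 = α by simp only [α]; ring,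
      show (2 - 2*H) - 1 = -α - α - 2 by simp only [α]; ring,
      show 2*H - 2 = α + α + 1 by simp only [α]; ring]
    exact integral_rpow_max_sub_mul_rpow_max_sub hts α hα
  rcases huv.lt_or_gt with h | h
  · simp_rw [abs_sub_comm u v, abs_of_pos (sub_pos.2 h), mul_comm (max (u - _) 0 ^ α)]
    exact h_beta h
  · rw [abs_of_pos (sub_pos.2 h)]
    exact h_beta h
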